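/- Let D be an n×n real matrix, λ a nonzero real number, α and β n×1 column vectors, and L an n×n matrix. If α^T D = λ j^T and L D + I = β j^T (where j is the all-ones vector), then D is invertible and D^{-1} = -L + (1/λ) β α^T. -/

import Mathlib

open Matrix

theorem Matrix.neg_add_inv_smul_vecMulVec_mul_eq_one {K n : Type*} [Field K] [Fintype n]
    [DecidableEq n] {D L : Matrix n n K} {lam : K} (hlam : lam ≠ 0) {α β : n → K}
    (h1 : α ᵥ* D = fun _ => lam) (h2 : L * D + 1 = vecMulVec β (fun _ => 1)) :
    (-L + lam⁻¹ • vecMulVec β α) * D = 1 := by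
  have hconst : lam⁻¹ • (fun _ : n => lam) = fun _ => 1 := funext fun _ => inv_mul_cancel₀ hlam
  rw [add_mul, neg_mul, smul_mul_assoc, vecMulVec_mul, h1, ← vecMulVec_smul, hconst,
    eq_sub_of_add_eq h2]
  abel

theorem stmt_0 {n : ℕ} (D L : Matrix (Fin n) (Fin n) ℝ) (lam : ℝ) (hlam : lam ≠ 0)
    (α β : Fin n → ℝ)
    (h1 : vecMul α D = fun _ => lam)
    (h2 : L * D + 1 = vecMulVec β (fun _ => 1)) :
    IsUnit D.det ∧ D⁻¹ = -L + lam⁻¹ • vecMulVec β α := by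
  have hleft := neg_add_inv_smul_vecMulVec_mul_eq_one hlam h1 h2
  exact ⟨isUnit_det_of_left_inverse hleft, inv_eq_left_inv hleft⟩
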